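/- arXiv:1602.00820 — 4 statements merged into one kernel-verified Lean document; each statement's English description precedes it below -/
import Mathlib

section
/- Let 0 < α < ∞ and 1 < D < ∞. Then there exists a constant C (depending only on α and D) such that for any finite index set {k_min, ..., k_max} ⊆ ℤ and any nonnegative sequences {b_k} and {c_k} indexed by it, satisfying b_{k+1} ≥ D·b_k for all k < k_max, it holds that ∑_{k=k_min}^{k_max} (∑_{m=k}^{k_max} c_m)^α · b_k ≤ C · ∑_{k=k_min}^{k_max} c_k^α · b_k. -/
/-!
Write `S k = ∑_{m ≥ k} c m`, so that `S k = c k + S (k + 1)`. For `α > 0` and any `μ > 1` there is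
`K` with `(x + y) ^ α ≤ K x ^ α + μ y ^ α` (subadditivity for `α ≤ 1`, weighted convexity for
`α ≥ 1`). Taking `1 < μ < D`, the sum `T = ∑ S k ^ α b k` satisfies
`T ≤ K ∑ c k ^ α b k + μ ∑ S (k + 1) ^ α b k`, and the geometric growth of `b` bounds the last
sum by `T / D`. Hence `(1 - μ / D) T ≤ K ∑ c k ^ α b k`.
-/

open Finset

lemma rpow_add_le_rpow_mul_add_rpow_mul {p s t x y : ℝ} (hp : 1 ≤ p) (hs : 0 < s) (ht : 0 < t)
    (hst : s + t = 1) (hx : 0 ≤ x) (hy : 0 ≤ y) :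
    (x + y) ^ p ≤ s ^ (1 - p) * x ^ p + t ^ (1 - p) * y ^ p := by
  have h := (convexOn_rpow hp).2 (Set.mem_Ici.2 (div_nonneg hx hs.le))
    (Set.mem_Ici.2 (div_nonneg hy ht.le)) hs.le ht.le hst
  simp only [smul_eq_mul] at h
  have hxy : s * (x / s) + t * (y / t) = x + y := by field_simp
  have hscale : ∀ {u z : ℝ}, 0 < u → 0 ≤ z → u * (z / u) ^ p = u ^ (1 - p) * z ^ p := by
    intro u z hu hz
    rw [Real.div_rpow hz hu.le, Real.rpow_sub hu, Real.rpow_one]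
    field_simp
  rwa [hxy, hscale hs hx, hscale ht hy] at h

lemma exists_rpow_add_le {α μ : ℝ} (hα : 0 < α) (hμ : 1 < μ) :
    ∃ K > 0, ∀ x y : ℝ, 0 ≤ x → 0 ≤ y → (x + y) ^ α ≤ K * x ^ α + μ * y ^ α := by
  rcases le_or_gt α 1 with hα1 | hα1
  · refine ⟨1, one_pos, fun x y hx hy => ?_⟩
    have hy' : y ^ α ≤ μ * y ^ α := le_mul_of_one_le_left (Real.rpow_nonneg hy α) hμ.le
    linarith [Real.rpow_add_le_add_rpow hx hy hα.le hα1]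
  · set t := μ ^ (1 - α)⁻¹
    have ht0 : 0 < t := Real.rpow_pos_of_pos (by linarith) _
    have ht1 : t < 1 := Real.rpow_lt_one_of_one_lt_of_neg hμ (inv_lt_zero.2 (by linarith))
    have htμ : t ^ (1 - α) = μ := by
      rw [← Real.rpow_mul (by linarith), inv_mul_cancel₀ (by linarith), Real.rpow_one]
    refine ⟨(1 - t) ^ (1 - α), Real.rpow_pos_of_pos (by linarith) _, fun x y hx hy => ?_⟩
    rw [← htμ]
    exact rpow_add_le_rpow_mul_add_rpow_mul hα1.le (by linarith) ht0 (by ring) hx hy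

lemma mul_sum_Icc_shift_mul_le {D : ℝ} {a b : ℤ} {f w : ℤ → ℝ} (hab : a ≤ b)
    (hf : ∀ k, 0 ≤ f k) (hw : ∀ k, 0 ≤ w k) (hf_top : f (b + 1) = 0)
    (hgeo : ∀ k, a ≤ k → k < b → D * w k ≤ w (k + 1)) :
    D * ∑ k ∈ Icc a b, f (k + 1) * w k ≤ ∑ k ∈ Icc a b, f k * w k := by
  calc D * ∑ k ∈ Icc a b, f (k + 1) * w k = ∑ k ∈ Icc a b, f (k + 1) * (D * w k) := by
        rw [mul_sum]
        exact sum_congr rfl fun k _ => by ring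
    _ ≤ ∑ k ∈ Icc a b, f (k + 1) * w (k + 1) := by
        refine sum_le_sum fun k hk => ?_
        obtain ⟨hak, hkb⟩ := mem_Icc.1 hk
        rcases hkb.lt_or_eq with hkb | rfl
        · exact mul_le_mul_of_nonneg_left (hgeo k hak hkb) (hf _)
        · simp [hf_top]
    _ = ∑ k ∈ Icc (a + 1) (b + 1), f k * w k := by
        rw [← map_add_right_Icc, sum_map]
        rfl
    _ ≤ ∑ k ∈ Icc a (b + 1), f k * w k :=
        sum_le_sum_of_subset_of_nonneg (Icc_subset_Icc_left (by omega))
          fun k _ _ => mul_nonneg (hf k) (hw k)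
    _ = ∑ k ∈ Icc a b, f k * w k := by
        rw [← insert_Icc_right_eq_Icc_add_one (by omega), sum_insert (by simp), hf_top,
          zero_mul, zero_add]

lemma sum_rpow_sum_Icc_mul_le {α D K μ : ℝ} (hα : 0 < α) (hμ : 0 ≤ μ) (hμD : μ < D)
    (hK : ∀ x y : ℝ, 0 ≤ x → 0 ≤ y → (x + y) ^ α ≤ K * x ^ α + μ * y ^ α)
    {kmin kmax : ℤ} (hk : kmin ≤ kmax) {b c : ℤ → ℝ} (hb : ∀ k, 0 ≤ b k) (hc : ∀ k, 0 ≤ c k)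
    (hgeo : ∀ k, kmin ≤ k → k < kmax → D * b k ≤ b (k + 1)) :
    ∑ k ∈ Icc kmin kmax, (∑ m ∈ Icc k kmax, c m) ^ α * b k ≤
      K * D / (D - μ) * ∑ k ∈ Icc kmin kmax, c k ^ α * b k := by
  set S : ℤ → ℝ := fun k => ∑ m ∈ Icc k kmax, c m
  have hS : ∀ k, 0 ≤ S k := fun k => sum_nonneg fun m _ => hc m
  set T := ∑ k ∈ Icc kmin kmax, S k ^ α * b k
  set U := ∑ k ∈ Icc kmin kmax, S (k + 1) ^ α * b k
  set A := ∑ k ∈ Icc kmin kmax, c k ^ α * b k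
  have hTU : T ≤ K * A + μ * U := by
    calc T ≤ ∑ k ∈ Icc kmin kmax, (K * c k ^ α + μ * S (k + 1) ^ α) * b k := by
          refine sum_le_sum fun k hk => mul_le_mul_of_nonneg_right ?_ (hb k)
          have hsplit : S k = c k + S (k + 1) := by
            simp only [S]
            rw [← insert_Icc_add_one_left_eq_Icc (mem_Icc.1 hk).2, sum_insert (by simp)]
          rw [hsplit]
          exact hK _ _ (hc k) (hS _)
      _ = K * A + μ * U := by
          simp only [A, U, mul_sum, ← sum_add_distrib]
          exact sum_congr rfl fun k _ => by ring
  have hUT : D * U ≤ T := by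
    refine mul_sum_Icc_shift_mul_le hk (fun k => Real.rpow_nonneg (hS k) α) hb ?_ hgeo
    simp [S, Real.zero_rpow hα.ne']
  rw [div_mul_eq_mul_div, le_div_iff₀ (sub_pos.2 hμD)]
  nlinarith [mul_le_mul_of_nonneg_left hUT hμ]

theorem stmt_0 (α D : ℝ) (hα : 0 < α) (hD : 1 < D) :
    ∃ C : ℝ, 0 < C ∧
      ∀ (kmin kmax : ℤ), kmin ≤ kmax →
        ∀ (b c : ℤ → ℝ), (∀ k, 0 ≤ b k) → (∀ k, 0 ≤ c k) →
          (∀ k, kmin ≤ k → k < kmax → D * b k ≤ b (k + 1)) →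
          ∑ k ∈ Finset.Icc kmin kmax, (∑ m ∈ Finset.Icc k kmax, c m) ^ α * b k ≤
            C * ∑ k ∈ Finset.Icc kmin kmax, (c k) ^ α * b k := by
  obtain ⟨K, hK0, hK⟩ := exists_rpow_add_le (μ := (1 + D) / 2) hα (by linarith)
  have hμD : (1 + D) / 2 < D := by linarith
  refine ⟨K * D / (D - (1 + D) / 2), div_pos (by positivity) (sub_pos.2 hμD), ?_⟩
  intro kmin kmax hk b c hb hc hgeo
  exact sum_rpow_sum_Icc_mul_le hα (by positivity) hμD hK hk hb hc hgeo
end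

section
/- Let 0 < α < ∞ and 1 < D < ∞. Then there exists a constant C (depending only on α and D) such that for any finite index set {k_min, ..., k_max} ⊆ ℤ and any nonnegative sequences {b_k} and {c_k} satisfying b_{k+1} ≥ D·b_k for all k < k_max, it holds that ∑_{k=k_min}^{k_max} (sup_{k ≤ m ≤ k_max} c_m)^α · b_k ≤ C · ∑_{k=k_min}^{k_max} c_k^α · b_k. -/
/-! For each `k`, the tail supremum of `c` is attained at some `m ≥ k`, and the growth condition
gives `b k ≤ D ^ (k - m) * b m`; so the `k`-th term is at most
`∑_{m ≥ k} D ^ (k - m) * c m ^ α * b m`. Exchanging the two sums, each `c m ^ α * b m` receives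
the weight `∑_{k ≤ m} D ^ (k - m) ≤ D / (D - 1)`. -/

open Finset

lemma le_zpow_sub_mul_of_growth {D : ℝ} (hD : 0 < D) {b : ℤ → ℝ} {kmin kmax : ℤ}
    (hgrow : ∀ k, kmin ≤ k → k < kmax → D * b k ≤ b (k + 1))
    {k m : ℤ} (hk : kmin ≤ k) (hkm : k ≤ m) (hm : m ≤ kmax) : b k ≤ D ^ (k - m) * b m := by
  induction m, hkm using Int.leInduction with
  | base => simp
  | succ m _ ih =>
    calc b k ≤ D ^ (k - m) * b m := ih (by omega)
      _ = D ^ (k - (m + 1)) * (D * b m) := by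
        rw [show k - m = k - (m + 1) + 1 by ring, zpow_add_one₀ hD.ne']
        ring
      _ ≤ D ^ (k - (m + 1)) * b (m + 1) :=
        mul_le_mul_of_nonneg_left (hgrow m (by omega) (by omega)) (zpow_pos hD _).le

lemma sum_Icc_zpow_sub_le {D : ℝ} (hD : 1 < D) (a m : ℤ) :
    ∑ k ∈ Icc a m, D ^ (k - m) ≤ D / (D - 1) := by
  have hreindex : ∑ k ∈ Icc a m, D ^ (k - m) = ∑ j ∈ Ico 0 (m - a + 1).toNat, D⁻¹ ^ j := by
    refine sum_nbij' (fun k ↦ (m - k).toNat) (fun j ↦ m - j) ?_ ?_ ?_ ?_ fun k hk ↦ ?_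
    iterate 4 (intro x hx; simp only [mem_Icc, mem_Ico] at hx ⊢; omega)
    rw [mem_Icc] at hk
    rw [inv_pow, ← zpow_natCast, ← zpow_neg, Int.toNat_of_nonneg (by omega), neg_sub]
  calc ∑ k ∈ Icc a m, D ^ (k - m)
      ≤ D⁻¹ ^ 0 / (1 - D⁻¹) := hreindex ▸ geom_sum_Ico_le_of_lt_one (by positivity)
        (inv_lt_one_of_one_lt₀ hD)
    _ = D / (D - 1) := by
      have : D - 1 ≠ 0 := by linarith
      field_simp

lemma iSup_Icc_rpow_mul_le_sum {α D : ℝ} (hD : 0 < D) {b c : ℤ → ℝ} (hb : ∀ k, 0 ≤ b k)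
    (hc : ∀ k, 0 ≤ c k) {kmin kmax : ℤ} (hgrow : ∀ k, kmin ≤ k → k < kmax → D * b k ≤ b (k + 1))
    {k : ℤ} (hk : kmin ≤ k) (hk' : k ≤ kmax) :
    (⨆ m : (Icc k kmax : Finset ℤ), c m) ^ α * b k ≤
      ∑ m ∈ Icc k kmax, c m ^ α * (D ^ (k - m) * b m) := by
  have : Nonempty (Icc k kmax : Finset ℤ) := ⟨⟨k, mem_Icc.2 ⟨le_rfl, hk'⟩⟩⟩
  obtain ⟨⟨m, hm⟩, hsup⟩ := exists_eq_ciSup_of_finite (f := fun m : (Icc k kmax : Finset ℤ) ↦ c m)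
  rw [← hsup]
  obtain ⟨hkm, hm'⟩ := mem_Icc.1 hm
  calc c m ^ α * b k ≤ c m ^ α * (D ^ (k - m) * b m) :=
        mul_le_mul_of_nonneg_left (le_zpow_sub_mul_of_growth hD hgrow hk hkm hm')
          (Real.rpow_nonneg (hc m) α)
    _ ≤ ∑ m ∈ Icc k kmax, c m ^ α * (D ^ (k - m) * b m) :=
        single_le_sum (f := fun m ↦ c m ^ α * (D ^ (k - m) * b m))
          (fun i _ ↦ mul_nonneg (Real.rpow_nonneg (hc i) α) (mul_nonneg (by positivity) (hb i))) hm

theorem stmt_1_general (α D : ℝ) (hD : 1 < D) :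
    ∃ C : ℝ, 0 < C ∧
      ∀ (kmin kmax : ℤ), kmin ≤ kmax →
        ∀ (b c : ℤ → ℝ), (∀ k, 0 ≤ b k) → (∀ k, 0 ≤ c k) →
          (∀ k, kmin ≤ k → k < kmax → D * b k ≤ b (k + 1)) →
          ∑ k ∈ Finset.Icc kmin kmax, (⨆ m : (Finset.Icc k kmax : Finset ℤ), c m) ^ α * b k ≤
            C * ∑ k ∈ Finset.Icc kmin kmax, (c k) ^ α * b k := by
  have hD0 : 0 < D := zero_lt_one.trans hD
  refine ⟨D / (D - 1), div_pos hD0 (by linarith), fun kmin kmax _ b c hb hc hgrow ↦ ?_⟩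
  calc ∑ k ∈ Icc kmin kmax, (⨆ m : (Icc k kmax : Finset ℤ), c m) ^ α * b k
      ≤ ∑ k ∈ Icc kmin kmax, ∑ m ∈ Icc k kmax, c m ^ α * (D ^ (k - m) * b m) :=
        sum_le_sum fun k hk ↦ iSup_Icc_rpow_mul_le_sum hD0 hb hc hgrow (mem_Icc.1 hk).1
          (mem_Icc.1 hk).2
    _ = ∑ m ∈ Icc kmin kmax, c m ^ α * b m * ∑ k ∈ Icc kmin m, D ^ (k - m) := by
        rw [sum_comm' (t' := Icc kmin kmax) (s' := fun m ↦ Icc kmin m)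
          (fun k m ↦ by simp only [mem_Icc]; omega)]
        refine sum_congr rfl fun m _ ↦ ?_
        rw [mul_sum]
        exact sum_congr rfl fun k _ ↦ by ring
    _ ≤ ∑ m ∈ Icc kmin kmax, c m ^ α * b m * (D / (D - 1)) :=
        sum_le_sum fun m _ ↦ mul_le_mul_of_nonneg_left (sum_Icc_zpow_sub_le hD kmin m)
          (mul_nonneg (Real.rpow_nonneg (hc m) α) (hb m))
    _ = D / (D - 1) * ∑ k ∈ Icc kmin kmax, c k ^ α * b k := by
        rw [mul_sum]
        exact sum_congr rfl fun _ _ ↦ by ring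

theorem stmt_1 (α D : ℝ) (hα : 0 < α) (hD : 1 < D) :
    ∃ C : ℝ, 0 < C ∧
      ∀ (kmin kmax : ℤ), kmin ≤ kmax →
        ∀ (b c : ℤ → ℝ), (∀ k, 0 ≤ b k) → (∀ k, 0 ≤ c k) →
          (∀ k, kmin ≤ k → k < kmax → D * b k ≤ b (k + 1)) →
          ∑ k ∈ Finset.Icc kmin kmax, (⨆ m : (Finset.Icc k kmax : Finset ℤ), c m) ^ α * b k ≤
            C * ∑ k ∈ Finset.Icc kmin kmax, (c k) ^ α * b k :=
  stmt_1_general α D hD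
end

section
/- Let 0 < α < ∞ and 1 < D < ∞, and let C = D/(D^{1/α} − 1)^α = (∑_{m=0}^{∞} D^{−m/α})^α. Then for any finite index set {k_min, ..., k_max} ⊆ ℤ and any nonnegative sequences {b_k}, {c_k} with b_{k+1} ≥ D·b_k for all k < k_max, it holds that sup_{k_min ≤ k ≤ k_max} (∑_{m=k}^{k_max} c_m)^α b_k ≤ (∑_{m=0}^{∞} D^{−m/α})^α · sup_{k_min ≤ k ≤ k_max} c_k^α b_k. -/
open Finset

theorem stmt_2 (α D : ℝ) (hα : 0 < α) (hD : 1 < D)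
    (kmin kmax : ℤ) (hk : kmin ≤ kmax)
    (b c : ℤ → ℝ) (hb : ∀ k, 0 ≤ b k) (hc : ∀ k, 0 ≤ c k)
    (hgrow : ∀ k, kmin ≤ k → k < kmax → D * b k ≤ b (k + 1)) :
    (⨆ k : (Finset.Icc kmin kmax : Finset ℤ),
        (∑ m ∈ Finset.Icc (k : ℤ) kmax, c m) ^ α * b k) ≤
      (∑' m : ℕ, D ^ (-(m : ℝ) / α)) ^ α *
        ⨆ k : (Finset.Icc kmin kmax : Finset ℤ), (c k) ^ α * b k := by
  have hD0 : (0:ℝ) < D := lt_trans one_pos hD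
  set T := ∑' m : ℕ, D ^ (-(m : ℝ) / α) with hTdef
  have hr1 : D ^ (-(1:ℝ)/α) < 1 :=
    Real.rpow_lt_one_of_one_lt_of_neg hD (div_neg_of_neg_of_pos (by norm_num) hα)
  have hr0 : (0:ℝ) ≤ D ^ (-(1:ℝ)/α) := Real.rpow_nonneg hD0.le _
  have heq : ∀ m : ℕ, D ^ (-(m:ℝ)/α) = (D ^ (-(1:ℝ)/α)) ^ m := by
    intro m
    rw [← Real.rpow_natCast (D ^ (-(1:ℝ)/α)) m, ← Real.rpow_mul hD0.le]
    congr 1; ring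
  have hsum : Summable (fun m : ℕ => D ^ (-(m:ℝ)/α)) := by
    simp_rw [heq]
    exact summable_geometric_of_lt_one hr0 hr1
  have hT0 : 0 ≤ T := tsum_nonneg fun m => Real.rpow_nonneg hD0.le _
  have hbdd : BddAbove (Set.range fun k : (Finset.Icc kmin kmax : Finset ℤ) =>
      (c k) ^ α * b k) := Set.Finite.bddAbove (Set.finite_range _)
  set S := ⨆ k : (Finset.Icc kmin kmax : Finset ℤ), (c k) ^ α * b k with hSdef
  have hSle : ∀ m : ℤ, kmin ≤ m → m ≤ kmax → c m ^ α * b m ≤ S := by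
    intro m h1 h2
    exact le_ciSup hbdd ⟨m, mem_Icc.mpr ⟨h1, h2⟩⟩
  have hS0 : 0 ≤ S :=
    le_trans (mul_nonneg (Real.rpow_nonneg (hc kmin) _) (hb kmin)) (hSle kmin le_rfl hk)
  haveI : Nonempty ((Finset.Icc kmin kmax : Finset ℤ) : Type) :=
    ⟨⟨kmin, mem_Icc.mpr ⟨le_rfl, hk⟩⟩⟩
  refine ciSup_le fun kk => ?_
  obtain ⟨k, hkmem⟩ := kk
  simp only
  rw [mem_Icc] at hkmem
  obtain ⟨hk1, hk2⟩ := hkmem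
  by_cases hbk : b k = 0
  · rw [hbk, mul_zero]
    exact mul_nonneg (Real.rpow_nonneg hT0 _) hS0
  have hbk' : 0 < b k := lt_of_le_of_ne (hb k) (Ne.symm hbk)
  -- growth estimate
  have grow : ∀ n : ℕ, k + (n:ℤ) ≤ kmax → D ^ n * b k ≤ b (k + n) := by
    intro n
    induction n with
    | zero => simp
    | succ n ih =>
      intro h
      have h1 : k + (n:ℤ) ≤ kmax := by push_cast at h ⊢; omega
      have h2 : k + (n:ℤ) < kmax := by push_cast at h ⊢; omega
      have h3 := hgrow (k + n) (by omega) h2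
      have h4 : (k : ℤ) + ((n:ℕ)+1:ℕ) = k + n + 1 := by push_cast; ring
      rw [h4]
      calc D ^ (n+1) * b k = D * (D ^ n * b k) := by ring
        _ ≤ D * b (k + n) := mul_le_mul_of_nonneg_left (ih h1) hD0.le
        _ ≤ b (k + n + 1) := h3
  -- per-term bound
  have hterm : ∀ m ∈ Icc k kmax,
      c m * b k ^ (1/α) ≤ S ^ (1/α) * D ^ (-(((m - k).toNat : ℕ) : ℝ)/α) := by
    intro m hm
    rw [mem_Icc] at hm
    obtain ⟨hm1, hm2⟩ := hm
    set n : ℕ := (m - k).toNat with hn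
    have hmk : m = k + (n:ℤ) := by omega
    have hg : D ^ n * b k ≤ b m := by rw [hmk]; exact grow n (by omega)
    have hX0 : (0:ℝ) < D ^ n * b k := mul_pos (pow_pos hD0 n) hbk'
    have h1 : c m ^ α * (D ^ n * b k) ≤ S :=
      le_trans (mul_le_mul_of_nonneg_left hg (Real.rpow_nonneg (hc m) α))
        (hSle m (by omega) hm2)
    have h2 : (c m * (D ^ n * b k) ^ (1/α)) ^ α = c m ^ α * (D ^ n * b k) := by
      rw [Real.mul_rpow (hc m) (Real.rpow_nonneg hX0.le _), ← Real.rpow_mul hX0.le,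
        one_div, inv_mul_cancel₀ hα.ne', Real.rpow_one]
    have h3 : c m * (D ^ n * b k) ^ (1/α) ≤ S ^ (1/α) := by
      have hle : (c m * (D ^ n * b k) ^ (1/α)) ^ α ≤ S := h2 ▸ h1
      have := Real.rpow_le_rpow (Real.rpow_nonneg
        (mul_nonneg (hc m) (Real.rpow_nonneg hX0.le _)) α) hle (by positivity : (0:ℝ) ≤ 1/α)
      rwa [← Real.rpow_mul (mul_nonneg (hc m) (Real.rpow_nonneg hX0.le _)),
        mul_one_div, div_self hα.ne', Real.rpow_one] at this
    rw [Real.mul_rpow (pow_pos hD0 n).le hbk'.le] at h3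
    have hDn : ((D:ℝ) ^ n) ^ (1/α) = D ^ ((n:ℝ)/α) := by
      rw [← Real.rpow_natCast D n, ← Real.rpow_mul hD0.le]
      congr 1; ring
    rw [hDn] at h3
    have hone : D ^ ((n:ℝ)/α) * D ^ (-(n:ℝ)/α) = 1 := by
      rw [← Real.rpow_add hD0, show (n:ℝ)/α + -(n:ℝ)/α = 0 from by ring, Real.rpow_zero]
    have hrw : c m * b k ^ (1/α)
        = (c m * (D ^ ((n:ℝ)/α) * b k ^ (1/α))) * D ^ (-(n:ℝ)/α) := by
      rw [show (c m * (D ^ ((n:ℝ)/α) * b k ^ (1/α))) * D ^ (-(n:ℝ)/α)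
          = c m * b k ^ (1/α) * (D ^ ((n:ℝ)/α) * D ^ (-(n:ℝ)/α)) from by ring,
        hone, mul_one]
    rw [hrw]
    exact mul_le_mul_of_nonneg_right h3 (Real.rpow_nonneg hD0.le _)
  -- sum the bounds
  have himg : ∑ m ∈ Icc k kmax, D ^ (-(((m - k).toNat : ℕ) : ℝ)/α) ≤ T := by
    have himg' : ∑ m ∈ Icc k kmax, D ^ (-(((m - k).toNat:ℕ):ℝ)/α)
        = ∑ n ∈ (Icc k kmax).image (fun m => (m - k).toNat), D ^ (-(n:ℝ)/α) := by
      rw [Finset.sum_image]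
      intro x hx y hy hxy
      rw [Finset.mem_coe, mem_Icc] at hx hy
      simp only at hxy
      omega
    rw [himg']
    exact Summable.sum_le_tsum _ (fun n _ => Real.rpow_nonneg hD0.le _) hsum
  have hfin : (∑ m ∈ Icc k kmax, c m) * b k ^ (1/α) ≤ S ^ (1/α) * T := by
    calc (∑ m ∈ Icc k kmax, c m) * b k ^ (1/α)
        = ∑ m ∈ Icc k kmax, c m * b k ^ (1/α) := by rw [Finset.sum_mul]
      _ ≤ ∑ m ∈ Icc k kmax, S ^ (1/α) * D ^ (-(((m - k).toNat : ℕ) : ℝ)/α) :=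
          Finset.sum_le_sum hterm
      _ = S ^ (1/α) * ∑ m ∈ Icc k kmax, D ^ (-(((m - k).toNat : ℕ) : ℝ)/α) := by
          rw [Finset.mul_sum]
      _ ≤ S ^ (1/α) * T :=
          mul_le_mul_of_nonneg_left himg (Real.rpow_nonneg hS0 _)
  have hcs0 : 0 ≤ ∑ m ∈ Icc k kmax, c m := Finset.sum_nonneg fun m _ => hc m
  have hmain := Real.rpow_le_rpow
    (mul_nonneg hcs0 (Real.rpow_nonneg hbk'.le _)) hfin hα.le
  rw [Real.mul_rpow hcs0 (Real.rpow_nonneg hbk'.le _),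
    ← Real.rpow_mul hbk'.le, one_div, inv_mul_cancel₀ hα.ne', Real.rpow_one,
    Real.mul_rpow (Real.rpow_nonneg hS0 _) hT0,
    ← Real.rpow_mul hS0, inv_mul_cancel₀ hα.ne', Real.rpow_one] at hmain
  calc (∑ m ∈ Icc k kmax, c m) ^ α * b k ≤ S * T ^ α := hmain
    _ = T ^ α * S := mul_comm _ _
end

section
/- Let 0 < q < 1 < p < ∞, r = pq/(p−q), θ > 0, let U be a θ-regular kernel, and let v, w be weights. If both A₁ := ∫_0^∞ (∫_0^t w)^{r/p} w(t) (∫_t^∞ U^{p'}(t,z) v^{1−p'}(z) dz)^{r/p'} dt < ∞ and A₂ := ∫_0^∞ (∫_0^t w(x) U^q(x,t) dx)^{r/p} w(t) sup_{z∈[t,∞)} U^q(t,z)(∫_z^∞ v^{1−p'})^{r/p'} dt < ∞, then for every covering sequence {t_k}_{k∈I} the discrete sum D₁-sum := ∑_{k∈I₀} (∫_{t_{k−1}}^{t_k} w)^{r/q} (∫_{t_k}^{t_{k+1}} U^{p'}(t_k,x) v^{1−p'}(x) dx)^{r/p'} satisfies D₁-sum ≤ c·A₁, with a constant c depending only on p,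 q, θ. -/
open MeasureTheory Finset
open scoped ENNReal

def ThetaRegular (θ : ℝ) (U : ℝ → ℝ → ℝ) : Prop :=
  (∀ x y, 0 ≤ U x y) ∧
  (∀ y x₁ x₂, 0 ≤ x₁ → x₁ ≤ x₂ → U x₂ y ≤ U x₁ y) ∧
  (∀ x y₁ y₂, y₁ ≤ y₂ → U x y₁ ≤ U x y₂) ∧
  (∀ x y z, 0 ≤ x → x < y → y < z → U x z ≤ θ * (U x y + U y z)) ∧
  (∀ y, 0 < y → 0 < U 0 y)

def IsWeight (w : ℝ → ℝ) : Prop :=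
  Measurable w ∧ (∀ x, 0 ≤ w x) ∧
  ∀ t : ℝ, 0 < t →
    0 < (∫⁻ x in Set.Ioo 0 t, ENNReal.ofReal (w x)) ∧
    (∫⁻ x in Set.Ioo 0 t, ENNReal.ofReal (w x)) < ⊤

/-- The real interval corresponding to a pair of extended-real endpoints. -/
def seg (a b : ℝ≥0∞) : Set ℝ := {x : ℝ | a < ENNReal.ofReal x ∧ ENNReal.ofReal x < b}

/-!
On a block `(t_{k-1}, t_k)` let `W(x) = ∫_{t_{k-1}}^x w`. Since `w dx` has no atoms, Fubini gives
`∫ W dW = W(t_k)² / 2`, hence `W ≥ W(t_k)/4` on a set of `w dx`-measure at least `W(t_k)/4`,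
and so `W(t_k)^{r/q} = W(t_k)^{r/p + 1} ≤ 4^{r/q} ∫ W^{r/p} dW`. As `U` is nonincreasing in its
first variable, the `v`-factor of the `k`-th summand is at most `∫_x^∞ U^{p'}(x,z) v^{1-p'}(z) dz`
for every `x < t_k`, and `W(x) ≤ ∫_0^x w`; so the `k`-th summand is at most `4^{r/q}` times the
part of `A₁` over the block. The blocks are disjoint.
-/

section DistributionFunction

variable {α : Type*} [LinearOrder α] [TopologicalSpace α] [OrderClosedTopology α]
  [MeasurableSpace α] [BorelSpace α] {ν : Measure α}

theorem measurable_measure_Iio : Measurable fun x => ν (Set.Iio x) :=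
  Monotone.measurable fun _ _ hxy => measure_mono (Set.Iio_subset_Iio hxy)

theorem lintegral_measure_Iio_eq_lintegral_measure_Ioi [SecondCountableTopology α] [SFinite ν] :
    ∫⁻ x, ν (Set.Iio x) ∂ν = ∫⁻ y, ν (Set.Ioi y) ∂ν := by
  have hmeas : Measurable (Function.uncurry fun x y : α => (Set.Iio x).indicator 1 y) :=
    (measurable_const (a := (1 : ℝ≥0∞))).indicator
      (measurableSet_lt measurable_snd measurable_fst)
  calc ∫⁻ x, ν (Set.Iio x) ∂ν = ∫⁻ x, ∫⁻ y, (Set.Iio x).indicator 1 y ∂ν ∂ν := by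
        simp only [lintegral_indicator_one measurableSet_Iio]
    _ = ∫⁻ y, ∫⁻ x, (Set.Ioi y).indicator 1 x ∂ν ∂ν := by
        rw [lintegral_lintegral_swap hmeas.aemeasurable]
        simp only [Set.indicator_apply, Set.mem_Iio, Set.mem_Ioi, Pi.one_apply]
    _ = ∫⁻ y, ν (Set.Ioi y) ∂ν := by
        simp only [lintegral_indicator_one measurableSet_Ioi]

theorem measure_Iio_add_measure_Ioi [NullSingletonClass ν] (x : α) :
    ν (Set.Iio x) + ν (Set.Ioi x) = ν Set.univ := by
  rw [← measure_union ((Set.Iio_disjoint_Ici le_rfl).mono_right Set.Ioi_subset_Ici_self)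
    measurableSet_Ioi, Set.Iio_union_Ioi, ← Measure.restrict_apply_univ, restrict_compl_singleton]

theorem two_mul_lintegral_measure_Iio [SecondCountableTopology α] [SFinite ν]
    [NullSingletonClass ν] :
    2 * ∫⁻ x, ν (Set.Iio x) ∂ν = ν Set.univ * ν Set.univ := by
  rw [two_mul]
  nth_rewrite 2 [lintegral_measure_Iio_eq_lintegral_measure_Ioi]
  rw [← lintegral_add_left measurable_measure_Iio]
  simp only [measure_Iio_add_measure_Ioi, lintegral_const]

theorem measure_univ_div_four_le_measure_setOf [SecondCountableTopology α] [IsFiniteMeasure ν]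
    [NullSingletonClass ν] :
    ν Set.univ / 4 ≤ ν {x | ν Set.univ / 4 ≤ ν (Set.Iio x)} := by
  set M := ν Set.univ
  set A := {x | M / 4 ≤ ν (Set.Iio x)}
  have hA : MeasurableSet A := measurableSet_le measurable_const measurable_measure_Iio
  have hupper : ∫⁻ x, ν (Set.Iio x) ∂ν ≤ M / 4 * M + M * ν A := by
    calc ∫⁻ x, ν (Set.Iio x) ∂ν ≤ ∫⁻ x, M / 4 + A.indicator (fun _ => M) x ∂ν := by
          refine lintegral_mono fun x => ?_
          by_cases hx : x ∈ A
          · simpa [Set.indicator_of_mem hx] using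
              le_add_left (measure_mono (Set.subset_univ _))
          · simpa [Set.indicator_of_notMem hx] using (not_le.mp hx).le
      _ = M / 4 * M + M * ν A := by
          rw [lintegral_add_left measurable_const, lintegral_const,
            lintegral_indicator_const hA]
  have hM : M ≠ ⊤ := measure_ne_top ν _
  have hreal := congrArg ENNReal.toReal (two_mul_lintegral_measure_Iio (ν := ν))
  have hupper' := ENNReal.toReal_mono (by finiteness) hupper
  rw [ENNReal.toReal_add (by finiteness) (by finiteness)] at hupper'
  simp only [ENNReal.toReal_mul, ENNReal.toReal_div, ENNReal.toReal_ofNat] at hreal hupper'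
  have key : M.toReal ≤ (ν A).toReal * 4 := by
    rcases (ENNReal.toReal_nonneg (a := M)).eq_or_lt with h0 | hpos
    · rw [← h0]; positivity
    · nlinarith [ENNReal.toReal_nonneg (a := ν A)]
  rw [ENNReal.div_le_iff (by norm_num) (by norm_num),
    ← ENNReal.toReal_le_toReal hM (by finiteness)]
  simpa using key

theorem measure_univ_rpow_le_lintegral_measure_Iio_rpow [SecondCountableTopology α]
    [IsFiniteMeasure ν] [NullSingletonClass ν] {s : ℝ} (hs : 0 ≤ s) :
    ν Set.univ ^ (s + 1) ≤ 4 ^ (s + 1) * ∫⁻ x, ν (Set.Iio x) ^ s ∂ν := by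
  set M := ν Set.univ
  set A := {x | M / 4 ≤ ν (Set.Iio x)}
  have hA : MeasurableSet A := measurableSet_le measurable_const measurable_measure_Iio
  have hlower : (M / 4) ^ (s + 1) ≤ ∫⁻ x, ν (Set.Iio x) ^ s ∂ν :=
    calc (M / 4) ^ (s + 1) ≤ (M / 4) ^ s * ν A := by
          rw [ENNReal.rpow_add_of_nonneg s 1 hs zero_le_one, ENNReal.rpow_one]
          gcongr
          exact measure_univ_div_four_le_measure_setOf
      _ = ∫⁻ x, A.indicator (fun _ => (M / 4) ^ s) x ∂ν :=
          (lintegral_indicator_const hA _).symm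
      _ ≤ ∫⁻ x, ν (Set.Iio x) ^ s ∂ν := by
          refine lintegral_mono fun x => ?_
          by_cases hx : x ∈ A
          · simpa [Set.indicator_of_mem hx] using ENNReal.rpow_le_rpow hx hs
          · simp [Set.indicator_of_notMem hx]
  calc M ^ (s + 1) = 4 ^ (s + 1) * (M / 4) ^ (s + 1) := by
        rw [← ENNReal.mul_rpow_of_nonneg _ _ (by linarith),
          ENNReal.mul_div_cancel (by norm_num) (by norm_num)]
    _ ≤ 4 ^ (s + 1) * ∫⁻ x, ν (Set.Iio x) ^ s ∂ν := by gcongr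

end DistributionFunction

theorem measure_rpow_le_setLIntegral_measure_Ioo_rpow {μ : Measure ℝ} [NullSingletonClass μ]
    {a : ℝ} {I : Set ℝ} (hIa : I ⊆ Set.Ioi a) (hμI : μ I ≠ ⊤) {s : ℝ} (hs : 0 ≤ s) :
    μ I ^ (s + 1) ≤ 4 ^ (s + 1) * ∫⁻ x in I, μ (Set.Ioo a x) ^ s ∂μ := by
  have : IsFiniteMeasure (μ.restrict I) := isFiniteMeasure_restrict.2 hμI
  calc μ I ^ (s + 1) = μ.restrict I Set.univ ^ (s + 1) := by
        rw [Measure.restrict_apply_univ]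
    _ ≤ 4 ^ (s + 1) * ∫⁻ x in I, μ.restrict I (Set.Iio x) ^ s ∂μ :=
        measure_univ_rpow_le_lintegral_measure_Iio_rpow hs
    _ ≤ 4 ^ (s + 1) * ∫⁻ x in I, μ (Set.Ioo a x) ^ s ∂μ := by
        refine mul_le_mul_right (lintegral_mono fun x => ENNReal.rpow_le_rpow ?_ hs) _
        rw [Measure.restrict_apply measurableSet_Iio]
        exact measure_mono fun y hy => ⟨hIa hy.2, hy.1⟩

theorem measurableSet_seg (a b : ℝ≥0∞) : MeasurableSet (seg a b) :=
  ENNReal.measurable_ofReal measurableSet_Ioo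

theorem seg_subset_Ioi_of_ofReal_le {a : ℝ≥0∞} {x : ℝ} (h : ENNReal.ofReal x ≤ a)
    (b : ℝ≥0∞) :
    seg a b ⊆ Set.Ioi x :=
  fun _ hz => (ENNReal.ofReal_lt_ofReal_iff'.1 (h.trans_lt hz.1)).1

theorem seg_subset_Ioi_zero (a b : ℝ≥0∞) : seg a b ⊆ Set.Ioi 0 :=
  seg_subset_Ioi_of_ofReal_le (by simp) b

theorem seg_subset_Ioo_toReal (a : ℝ≥0∞) {b : ℝ≥0∞} (hb : b ≠ ⊤) :
    seg a b ⊆ Set.Ioo 0 b.toReal :=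
  fun _ hx => ⟨seg_subset_Ioi_zero a b hx, (ENNReal.ofReal_lt_iff_lt_toReal
    (seg_subset_Ioi_zero a b hx).le hb).1 hx.2⟩

theorem pairwiseDisjoint_seg {m n : ℤ} {t : ℤ → ℝ≥0∞} (ht : MonotoneOn t (Set.Icc m n)) :
    (Set.Ioc m n).PairwiseDisjoint fun k => seg (t (k - 1)) (t k) := by
  have key : ∀ j ∈ Set.Ioc m n, ∀ k ∈ Set.Ioc m n, j < k →
      Disjoint (seg (t (j - 1)) (t j)) (seg (t (k - 1)) (t k)) := by
    intro j ⟨hj₁, hj₂⟩ k ⟨hk₁, hk₂⟩ hjk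
    have hle : t j ≤ t (k - 1) := ht ⟨by omega, hj₂⟩ ⟨by omega, by omega⟩ (by omega)
    exact Set.disjoint_left.2 fun x hxj hxk => (hxj.2.trans_le hle).not_gt hxk.1
  intro j hj k hk hjk
  rcases hjk.lt_or_gt with h | h
  · exact key j hj k hk h
  · exact (key k hk j hj h).symm

theorem sum_setLIntegral_seg_le {m n : ℤ} {t : ℤ → ℝ≥0∞} (ht : MonotoneOn t (Set.Icc m n))
    (f : ℝ → ℝ≥0∞) :
    ∑ k ∈ Finset.Icc (m + 1) (n - 1), ∫⁻ x in seg (t (k - 1)) (t k), f x ≤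
      ∫⁻ x in Set.Ioi 0, f x := by
  have hsub : (↑(Finset.Icc (m + 1) (n - 1)) : Set ℤ) ⊆ Set.Ioc m n := by
    intro k hk
    simp only [Finset.coe_Icc, Set.mem_Icc] at hk
    exact ⟨by omega, by omega⟩
  rw [← lintegral_biUnion_finset ((pairwiseDisjoint_seg ht).subset hsub)
    fun k _ => measurableSet_seg _ _]
  exact lintegral_mono_set (Set.iUnion₂_subset fun k _ => seg_subset_Ioi_zero _ _)

theorem setLIntegral_seg_rpow_mul_le {w : ℝ → ℝ} (hw : Measurable w) {F : ℝ → ℝ → ℝ≥0∞}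
    (hF : ∀ z x₁ x₂, 0 ≤ x₁ → x₁ ≤ x₂ → F x₂ z ≤ F x₁ z) {a b : ℝ≥0∞} (hb : b ≠ ⊤) (c : ℝ≥0∞)
    (hwab : ∫⁻ x in seg a b, ENNReal.ofReal (w x) ≠ ⊤) {s e : ℝ} (hs : 0 ≤ s) (he : 0 ≤ e) :
    (∫⁻ x in seg a b, ENNReal.ofReal (w x)) ^ (s + 1) * (∫⁻ z in seg b c, F b.toReal z) ^ e ≤
      4 ^ (s + 1) * ∫⁻ x in seg a b, (∫⁻ y in Set.Ioo 0 x, ENNReal.ofReal (w y)) ^ s *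
        ENNReal.ofReal (w x) * (∫⁻ z in Set.Ioi x, F x z) ^ e := by
  set μ := volume.withDensity fun x => ENNReal.ofReal (w x)
  set B := (∫⁻ z in seg b c, F b.toReal z) ^ e
  have hμ {I : Set ℝ} (hI : MeasurableSet I) : μ I = ∫⁻ x in I, ENNReal.ofReal (w x) :=
    withDensity_apply _ hI
  have hB (x : ℝ) (hx : x ∈ seg a b) : B ≤ (∫⁻ z in Set.Ioi x, F x z) ^ e := by
    have hxb : x ≤ b.toReal := (ENNReal.ofReal_le_iff_le_toReal hb).1 hx.2.le
    refine ENNReal.rpow_le_rpow ?_ he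
    calc ∫⁻ z in seg b c, F b.toReal z ≤ ∫⁻ z in seg b c, F x z :=
          lintegral_mono fun z => hF z x b.toReal (seg_subset_Ioi_zero a b hx).le hxb
      _ ≤ ∫⁻ z in Set.Ioi x, F x z :=
          lintegral_mono_set (seg_subset_Ioi_of_ofReal_le hx.2.le c)
  have hmeas : Measurable fun x => μ (Set.Ioo 0 x) ^ s :=
    (Monotone.measurable fun _ _ h => measure_mono (Set.Ioo_subset_Ioo_right h)).pow_const s
  rw [← hμ (measurableSet_seg a b)]
  calc μ (seg a b) ^ (s + 1) * B
      ≤ 4 ^ (s + 1) * (∫⁻ x in seg a b, μ (Set.Ioo 0 x) ^ s ∂μ) * B := by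
        gcongr
        exact measure_rpow_le_setLIntegral_measure_Ioo_rpow (seg_subset_Ioi_zero a b)
          (by rwa [hμ (measurableSet_seg a b)]) hs
    _ = 4 ^ (s + 1) * ∫⁻ x in seg a b, μ (Set.Ioo 0 x) ^ s * ENNReal.ofReal (w x) * B := by
        rw [mul_assoc, ← lintegral_mul_const _ hmeas,
          setLIntegral_withDensity_eq_setLIntegral_mul _ hw.ennreal_ofReal (hmeas.mul_const B)
            (measurableSet_seg a b)]
        simp only [Pi.mul_apply, mul_comm, mul_left_comm]
    _ ≤ _ := by
        refine mul_le_mul_right (setLIntegral_mono' (measurableSet_seg a b) fun x hx => ?_) _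
        rw [hμ measurableSet_Ioo]
        exact mul_le_mul_right (hB x hx) _

theorem IsWeight.setLIntegral_seg_ne_top {w : ℝ → ℝ} (hw : IsWeight w) {a b : ℝ≥0∞}
    (hab : a < b) (hb : b ≠ ⊤) : ∫⁻ x in seg a b, ENNReal.ofReal (w x) ≠ ⊤ := by
  refine ne_top_of_le_ne_top ?_ (lintegral_mono_set (seg_subset_Ioo_toReal a hb))
  exact (hw.2.2 _ (ENNReal.toReal_pos (pos_of_gt hab).ne' hb)).2.ne

theorem stmt_15_general (p q θ : ℝ) (hq0 : 0 < q) (hq1 : q < 1) (hp : 1 < p)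
    (r p' : ℝ) (hr : r = p * q / (p - q)) (hp' : p' = p / (p - 1)) :
    ∃ c : ℝ≥0∞, 0 < c ∧ c ≠ ⊤ ∧
      ∀ (U : ℝ → ℝ → ℝ) (v w : ℝ → ℝ),
        ThetaRegular θ U → IsWeight v → IsWeight w →
        (∫⁻ t in Set.Ioi (0 : ℝ),
            (∫⁻ x in Set.Ioo (0 : ℝ) t, ENNReal.ofReal (w x)) ^ (r / p) *
              ENNReal.ofReal (w t) *
              (∫⁻ z in Set.Ioi t,
                  ENNReal.ofReal ((U t z) ^ p' * (v z) ^ (1 - p'))) ^ (r / p')) < ⊤ →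
        (∫⁻ t in Set.Ioi (0 : ℝ),
            (∫⁻ x in Set.Ioo (0 : ℝ) t,
                ENNReal.ofReal (w x) * ENNReal.ofReal (U x t) ^ q) ^ (r / p) *
              ENNReal.ofReal (w t) *
              ⨆ z ∈ Set.Ici t, ENNReal.ofReal (U t z) ^ q *
                (∫⁻ s in Set.Ioi z, ENNReal.ofReal ((v s) ^ (1 - p'))) ^ (r / p')) < ⊤ →
        ∀ (kmin kmax : ℤ), kmin + 2 ≤ kmax →
          ∀ t : ℤ → ℝ≥0∞, t kmin = 0 → t kmax = ⊤ →
            (∀ k ∈ Finset.Icc kmin kmax, ∀ l ∈ Finset.Icc kmin kmax, k < l → t k < t l) →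
            ∑ k ∈ Finset.Icc (kmin + 1) (kmax - 1),
                (∫⁻ x in seg (t (k - 1)) (t k), ENNReal.ofReal (w x)) ^ (r / q) *
                  (∫⁻ x in seg (t k) (t (k + 1)),
                      ENNReal.ofReal ((U (t k).toReal x) ^ p' * (v x) ^ (1 - p'))) ^ (r / p') ≤
              c * ∫⁻ s in Set.Ioi (0 : ℝ),
                (∫⁻ x in Set.Ioo (0 : ℝ) s, ENNReal.ofReal (w x)) ^ (r / p) *
                  ENNReal.ofReal (w s) *
                  (∫⁻ z in Set.Ioi s,
                      ENNReal.ofReal ((U s z) ^ p' * (v z) ^ (1 - p'))) ^ (r / p') := by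
  have hp0 : 0 < p := by linarith
  have hr0 : 0 < r := by rw [hr]; exact div_pos (by positivity) (by linarith)
  have hp'0 : 0 < p' := by rw [hp']; exact div_pos hp0 (by linarith)
  have hrq : r / q = r / p + 1 := by
    rw [hr]; field_simp [show p - q ≠ 0 by linarith]; ring
  refine ⟨4 ^ (r / q), by positivity, by finiteness, ?_⟩
  intro U v w hU hv hw _ _ kmin kmax hk t _ htop ht
  have htmono : StrictMonoOn t (Set.Icc kmin kmax) := fun k hk l hl =>
    ht k (by simpa using hk) l (by simpa using hl)
  have hF (z x₁ x₂ : ℝ) (hx₁ : 0 ≤ x₁) (hx : x₁ ≤ x₂) :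
      ENNReal.ofReal (U x₂ z ^ p' * v z ^ (1 - p')) ≤
        ENNReal.ofReal (U x₁ z ^ p' * v z ^ (1 - p')) := by
    gcongr
    · exact Real.rpow_nonneg (hv.2.1 z) _
    · exact hU.1 x₂ z
    · exact hU.2.1 z x₁ x₂ hx₁ hx
  set Φ : ℝ → ℝ≥0∞ := fun x => (∫⁻ y in Set.Ioo 0 x, ENNReal.ofReal (w y)) ^ (r / p) *
    ENNReal.ofReal (w x) *
    (∫⁻ z in Set.Ioi x, ENNReal.ofReal (U x z ^ p' * v z ^ (1 - p'))) ^ (r / p')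
  calc _ ≤ ∑ k ∈ Finset.Icc (kmin + 1) (kmax - 1), 4 ^ (r / q) *
          ∫⁻ x in seg (t (k - 1)) (t k), Φ x := by
        refine Finset.sum_le_sum fun k hkI => ?_
        simp only [Finset.mem_Icc] at hkI
        have hlt : t (k - 1) < t k := htmono ⟨by omega, by omega⟩ ⟨by omega, by omega⟩ (by omega)
        have hne : t k ≠ ⊤ :=
          htop ▸ (htmono ⟨by omega, by omega⟩ ⟨by omega, le_rfl⟩ (by omega)).ne
        rw [hrq]
        exact setLIntegral_seg_rpow_mul_le (s := r / p) (e := r / p') hw.1 hF hne _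
          (hw.setLIntegral_seg_ne_top hlt hne) (by positivity) (by positivity)
    _ ≤ _ := by
        rw [← Finset.mul_sum]
        exact mul_le_mul_right (sum_setLIntegral_seg_le htmono.monotoneOn _) _

theorem stmt_15 (p q θ : ℝ) (hq0 : 0 < q) (hq1 : q < 1) (hp : 1 < p) (hθ : 0 < θ)
    (r p' : ℝ) (hr : r = p * q / (p - q)) (hp' : p' = p / (p - 1)) :
    ∃ c : ℝ≥0∞, 0 < c ∧ c ≠ ⊤ ∧
      ∀ (U : ℝ → ℝ → ℝ) (v w : ℝ → ℝ),
        ThetaRegular θ U → IsWeight v → IsWeight w →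
        (∫⁻ t in Set.Ioi (0 : ℝ),
            (∫⁻ x in Set.Ioo (0 : ℝ) t, ENNReal.ofReal (w x)) ^ (r / p) *
              ENNReal.ofReal (w t) *
              (∫⁻ z in Set.Ioi t,
                  ENNReal.ofReal ((U t z) ^ p' * (v z) ^ (1 - p'))) ^ (r / p')) < ⊤ →
        (∫⁻ t in Set.Ioi (0 : ℝ),
            (∫⁻ x in Set.Ioo (0 : ℝ) t,
                ENNReal.ofReal (w x) * ENNReal.ofReal (U x t) ^ q) ^ (r / p) *
              ENNReal.ofReal (w t) *
              ⨆ z ∈ Set.Ici t, ENNReal.ofReal (U t z) ^ q *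
                (∫⁻ s in Set.Ioi z, ENNReal.ofReal ((v s) ^ (1 - p'))) ^ (r / p')) < ⊤ →
        ∀ (kmin kmax : ℤ), kmin + 2 ≤ kmax →
          ∀ t : ℤ → ℝ≥0∞, t kmin = 0 → t kmax = ⊤ →
            (∀ k ∈ Finset.Icc kmin kmax, ∀ l ∈ Finset.Icc kmin kmax, k < l → t k < t l) →
            ∑ k ∈ Finset.Icc (kmin + 1) (kmax - 1),
                (∫⁻ x in seg (t (k - 1)) (t k), ENNReal.ofReal (w x)) ^ (r / q) *
                  (∫⁻ x in seg (t k) (t (k + 1)),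
                      ENNReal.ofReal ((U (t k).toReal x) ^ p' * (v x) ^ (1 - p'))) ^ (r / p') ≤
              c * ∫⁻ s in Set.Ioi (0 : ℝ),
                (∫⁻ x in Set.Ioo (0 : ℝ) s, ENNReal.ofReal (w x)) ^ (r / p) *
                  ENNReal.ofReal (w s) *
                  (∫⁻ z in Set.Ioi s,
                      ENNReal.ofReal ((U s z) ^ p' * (v z) ^ (1 - p'))) ^ (r / p') :=
  stmt_15_general p q θ hq0 hq1 hp r p' hr hp'
end
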